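/- Fix 0 < m < L, set κ = L/m, and let δ > 0. If s is a real number with m ≤ s ≤ (1+δ)m ≤ L (so that κ ≥ 1 + δ), then ρ(s, m) ≤ r_δ(κ), where r_δ(κ) = (√(κ−1)/√κ) · (√(κ−1) + √δ)/(√κ + √(1+δ)). -/

import Mathlib

/-- `β(s) = (√L − √s)/(√L + √s)`. -/
noncomputable def momBeta (L s : ℝ) : ℝ :=
  (Real.sqrt L - Real.sqrt s) / (Real.sqrt L + Real.sqrt s)

/-- The complex square root of a real number: `√x` if `x ≥ 0`, `i√(−x)` otherwise. -/
noncomputable def csqrt (x : ℝ) : ℂ :=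
  if 0 ≤ x then ((Real.sqrt x : ℝ) : ℂ) else Complex.I * ((Real.sqrt (-x) : ℝ) : ℂ)

/-- The discriminant `((1+β(s))²/4)(1 − ℓ/L)² − β(s)(1 − ℓ/L)`. -/
noncomputable def discr (L s ℓ : ℝ) : ℝ :=
  ((1 + momBeta L s) / 2) ^ 2 * (1 - ℓ / L) ^ 2 - momBeta L s * (1 - ℓ / L)

/-- The eigenvalue `((1+β(s))/2)(1 − ℓ/L) + sqrt(discriminant)` of `G(s, ℓ)`. -/
noncomputable def eigP (L s ℓ : ℝ) : ℂ :=
  (((1 + momBeta L s) / 2 * (1 - ℓ / L) : ℝ) : ℂ) + csqrt (discr L s ℓ)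

/-- The eigenvalue `((1+β(s))/2)(1 − ℓ/L) − sqrt(discriminant)` of `G(s, ℓ)`. -/
noncomputable def eigM (L s ℓ : ℝ) : ℂ :=
  (((1 + momBeta L s) / 2 * (1 - ℓ / L) : ℝ) : ℂ) - csqrt (discr L s ℓ)

/-- `ρ(s, ℓ)`: the maximum modulus of the two eigenvalues of `G(s, ℓ)`. -/
noncomputable def specRho (L s ℓ : ℝ) : ℝ :=
  max (‖eigP L s ℓ‖) (‖eigM L s ℓ‖)

/-- `r_δ(z) = (√(z−1)/√z)·(√(z−1) + √δ)/(√z + √(1+δ))`. -/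
noncomputable def rDelta (δ z : ℝ) : ℝ :=
  Real.sqrt (z - 1) / Real.sqrt z *
    ((Real.sqrt (z - 1) + Real.sqrt δ) / (Real.sqrt z + Real.sqrt (1 + δ)))

/-!
The two eigenvalues are the roots of `q_β(λ) = λ² - (1 + β) x λ + β x` with `β = β(s)` and
`x = 1 - m/L = (κ - 1)/κ`, and `r_δ(κ)` is the larger root of `q_{β_δ(κ)}`. Since
`β_δ(κ) ≤ β(s) ≤ β(m)` and `q_β(r)` is nondecreasing in `β` for `r ≤ 1`, the number `r = r_δ(κ)`
lies to the right of both real roots of `q_{β(s)}`; when the roots are complex, their common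
modulus is `√(β(s) x) ≤ √(β(m) x) = 1 - 1/√κ ≤ r`.
-/

lemma norm_add_sub_csqrt_le {a d r : ℝ} (ha : 0 ≤ a) (har : a ≤ r)
    (hd : d ≤ (r - a) ^ 2) (hprod : a ^ 2 - d ≤ r ^ 2) :
    max ‖(a : ℂ) + csqrt d‖ ‖(a : ℂ) - csqrt d‖ ≤ r := by
  rcases le_or_gt 0 d with hd0 | hd0
  · have hw : √d ≤ r - a := Real.sqrt_le_iff.mpr ⟨by linarith, hd⟩
    have hw0 : 0 ≤ √d := Real.sqrt_nonneg d
    rw [csqrt, if_pos hd0, ← Complex.ofReal_add, ← Complex.ofReal_sub, Complex.norm_real,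
      Complex.norm_real, Real.norm_eq_abs, Real.norm_eq_abs]
    exact max_le (abs_le.mpr ⟨by linarith, by linarith⟩) (abs_le.mpr ⟨by linarith, by linarith⟩)
  · have hmod : √(a ^ 2 + √(-d) ^ 2) ≤ r := by
      rw [Real.sq_sqrt (by linarith)]
      exact Real.sqrt_le_iff.mpr ⟨ha.trans har, by linarith⟩
    have hsub : (a : ℂ) - Complex.I * √(-d) = a + ((-√(-d) : ℝ) : ℂ) * Complex.I := by
      push_cast; ring
    rw [csqrt, if_neg hd0.not_ge, hsub, mul_comm, Complex.norm_add_mul_I, Complex.norm_add_mul_I,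
      neg_sq]
    exact max_le hmod hmod

lemma momBeta_div_div {L s m : ℝ} (hm : 0 < m) : momBeta (L / m) (s / m) = momBeta L s := by
  have : √m ≠ 0 := (Real.sqrt_pos.mpr hm).ne'
  rw [momBeta, momBeta, Real.sqrt_div' _ hm.le, Real.sqrt_div' _ hm.le, ← sub_div, ← add_div,
    div_div_div_cancel_right₀ this]

lemma momBeta_antitoneOn {L : ℝ} (hL : 0 < L) : AntitoneOn (momBeta L) (Set.Ici 0) := by
  intro s hs s' _ h
  have hL' := Real.sqrt_pos.mpr hL
  have h' := Real.sqrt_le_sqrt h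
  have := Real.sqrt_nonneg s
  rw [momBeta, momBeta, div_le_div_iff₀ (by positivity) (by positivity)]
  nlinarith

lemma momBeta_nonneg {L s : ℝ} (hs : s ≤ L) : 0 ≤ momBeta L s :=
  div_nonneg (sub_nonneg.mpr (Real.sqrt_le_sqrt hs)) (by positivity)

lemma sqrt_sub_one_le_sqrt_sub_one {z : ℝ} (hz : 1 ≤ z) : √z - 1 ≤ √(z - 1) := by
  have h1 : 1 ≤ √z := Real.one_le_sqrt.mpr hz
  have h2 : √z ^ 2 = z := Real.sq_sqrt (by linarith)
  exact (le_abs_self _).trans (Real.abs_le_sqrt (by nlinarith))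

lemma rDelta_eq_div {δ z : ℝ} :
    rDelta δ z = √(z - 1) * (√(z - 1) + √δ) / (√z * (√z + √(1 + δ))) :=
  div_mul_div_comm _ _ _ _

lemma rDelta_le_one {δ z : ℝ} (hδ : 0 ≤ δ) : rDelta δ z ≤ 1 := by
  rw [rDelta_eq_div]
  have he : √(z - 1) ≤ √z := Real.sqrt_le_sqrt (by linarith)
  have hc : √δ ≤ √(1 + δ) := Real.sqrt_le_sqrt (by linarith)
  exact div_le_one_of_le₀ (mul_le_mul he (add_le_add he hc) (by positivity) (by positivity))
    (by positivity)

lemma one_sub_inv_sqrt_le_rDelta {δ z : ℝ} (hδ : 0 ≤ δ) (hz : 1 ≤ z) :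
    1 - 1 / √z ≤ rDelta δ z := by
  have hk : 1 ≤ √z := Real.one_le_sqrt.mpr hz
  have hb : 1 ≤ √(1 + δ) := Real.one_le_sqrt.mpr (by linarith)
  have hke := sqrt_sub_one_le_sqrt_sub_one hz
  have hbc : √(1 + δ) - 1 ≤ √δ := by
    simpa using sqrt_sub_one_le_sqrt_sub_one (le_add_of_nonneg_right hδ)
  have he2 : √(z - 1) ^ 2 = √z ^ 2 - 1 := by
    rw [Real.sq_sqrt (by linarith), Real.sq_sqrt (by linarith)]
  -- with `√(z - 1)² = √z² - 1`, cross-multiplying leaves exactly `hcross`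
  have hcross : (√z - 1) * (√(1 + δ) - 1) ≤ √(z - 1) * √δ :=
    mul_le_mul hke hbc (by linarith) (Real.sqrt_nonneg _)
  rw [rDelta_eq_div, one_sub_div (by positivity), div_le_div_iff₀ (by positivity) (by positivity)]
  nlinarith

lemma rDelta_isRoot {δ z : ℝ} (hδ : 0 ≤ δ) (hz : 1 ≤ z) :
    rDelta δ z ^ 2 - (1 + momBeta z (1 + δ)) * ((z - 1) / z) * rDelta δ z
      + momBeta z (1 + δ) * ((z - 1) / z) = 0 := by
  have hx : (z - 1) / z = √(z - 1) ^ 2 / √z ^ 2 := by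
    rw [Real.sq_sqrt (by linarith), Real.sq_sqrt (by linarith)]
  have hek : √(z - 1) ^ 2 = √z ^ 2 - 1 := by
    rw [Real.sq_sqrt (by linarith), Real.sq_sqrt (by linarith)]
  have hbc : √(1 + δ) ^ 2 = 1 + √δ ^ 2 := by
    rw [Real.sq_sqrt (by linarith), Real.sq_sqrt hδ]
  rw [rDelta_eq_div, momBeta, hx]
  field_simp
  linear_combination (-(√(z - 1) ^ 2 * √z)) * (hbc + hek)

lemma momBeta_one_mul {z : ℝ} (hz : 0 < z) :
    momBeta z 1 * ((z - 1) / z) = (1 - 1 / √z) ^ 2 := by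
  have hx : (z - 1) / z = (√z - 1) * (√z + 1) / √z ^ 2 := by
    rw [show (√z - 1) * (√z + 1) = √z ^ 2 - 1 by ring, Real.sq_sqrt hz.le]
  rw [momBeta, Real.sqrt_one, hx]
  field_simp

lemma one_add_momBeta_one_div_two_mul {z : ℝ} (hz : 0 < z) :
    (1 + momBeta z 1) / 2 * ((z - 1) / z) = 1 - 1 / √z := by
  have hx : (z - 1) / z = (√z - 1) * (√z + 1) / √z ^ 2 := by
    rw [show (√z - 1) * (√z + 1) = √z ^ 2 - 1 by ring, Real.sq_sqrt hz.le]
  rw [momBeta, Real.sqrt_one, hx]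
  field_simp
  ring

lemma specRho_le_of_isRoot {L s ℓ B r : ℝ} (hx : 0 ≤ 1 - ℓ / L) (hβ : 0 ≤ momBeta L s)
    (hB : B ≤ momBeta L s) (hr : r ≤ 1)
    (hroot : r ^ 2 - (1 + B) * (1 - ℓ / L) * r + B * (1 - ℓ / L) = 0)
    (hvertex : (1 + momBeta L s) / 2 * (1 - ℓ / L) ≤ r)
    (hprod : momBeta L s * (1 - ℓ / L) ≤ r ^ 2) :
    specRho L s ℓ ≤ r := by
  refine norm_add_sub_csqrt_le (by positivity) hvertex ?_ (by rw [discr]; linarith)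
  -- the quadratic `λ² - (1 + β) x λ + β x` is nondecreasing in `β` at `λ = r ≤ 1`
  have hmono := mul_nonneg (mul_nonneg (sub_nonneg.mpr hB) hx) (sub_nonneg.mpr hr)
  rw [discr]
  nlinarith

theorem stmt15_general {L m δ s : ℝ} (hm : 0 < m) (hδ : 0 < δ)
    (hms : m ≤ s) (hsδ : s ≤ (1 + δ) * m) (hδL : (1 + δ) * m ≤ L) :
    specRho L s m ≤ rDelta δ (L / m) := by
  have hx : 1 - m / L = (L / m - 1) / (L / m) := by
    have hL : 0 < L := by nlinarith
    field_simp
  set z := L / m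
  have hz : 1 + δ ≤ z := (le_div_iff₀ hm).mpr hδL
  have hz1 : 1 ≤ z := by linarith
  have hβ : momBeta L s = momBeta z (s / m) := (momBeta_div_div hm).symm
  have hsm : 0 ≤ s / m := div_nonneg (by linarith) hm.le
  have hBβ : momBeta z (1 + δ) ≤ momBeta z (s / m) :=
    momBeta_antitoneOn (by linarith) (Set.mem_Ici.mpr hsm)
      (Set.mem_Ici.mpr (by linarith)) ((div_le_iff₀ hm).mpr hsδ)
  have hββ₁ : momBeta z (s / m) ≤ momBeta z 1 :=
    momBeta_antitoneOn (by linarith) (Set.mem_Ici.mpr zero_le_one)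
      (Set.mem_Ici.mpr hsm) ((one_le_div₀ hm).mpr hms)
  have hx0 : 0 ≤ (z - 1) / z := div_nonneg (by linarith) (by linarith)
  refine specRho_le_of_isRoot (hx ▸ hx0) (momBeta_nonneg (by linarith)) (hβ ▸ hBβ)
    (rDelta_le_one hδ.le) (hx ▸ rDelta_isRoot hδ.le hz1) ?_ ?_ <;> rw [hx, hβ]
  · calc (1 + momBeta z (s / m)) / 2 * ((z - 1) / z)
        ≤ (1 + momBeta z 1) / 2 * ((z - 1) / z) := by gcongr
      _ = 1 - 1 / √z := one_add_momBeta_one_div_two_mul (by linarith)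
      _ ≤ rDelta δ z := one_sub_inv_sqrt_le_rDelta hδ.le hz1
  · calc momBeta z (s / m) * ((z - 1) / z) ≤ momBeta z 1 * ((z - 1) / z) := by gcongr
      _ = (1 - 1 / √z) ^ 2 := momBeta_one_mul (by linarith)
      _ ≤ rDelta δ z ^ 2 := by
          have hg0 : 0 ≤ 1 - 1 / √z := by
            rw [sub_nonneg, div_le_one (by positivity)]
            exact Real.one_le_sqrt.mpr hz1
          gcongr
          exact one_sub_inv_sqrt_le_rDelta hδ.le hz1

/-- (Lemma `la:lem:rho-leq-rhoeps`.) If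
`m ≤ s ≤ (1+δ)m ≤ L`, then `ρ(s, m) ≤ r_δ(κ)` where `κ = L/m`. -/
theorem stmt15 {L m δ s : ℝ} (hm : 0 < m) (hmL : m < L) (hδ : 0 < δ)
    (hms : m ≤ s) (hsδ : s ≤ (1 + δ) * m) (hδL : (1 + δ) * m ≤ L) :
    specRho L s m ≤ rDelta δ (L / m) :=
  stmt15_general hm hδ hms hsδ hδL
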